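/- For a linear order γ, the order (1+α)^γ is well-founded for every well-founded α if and only if γ is well-founded. -/

import Mathlib

/-- `(1+α)^γ`: finite sequences of pairs `(x,y)` with strictly decreasing first
components in `γ`, `y` ranging over `α`. -/
def EList (γ α : Type*) [LinearOrder γ] : Type _ :=
  {l : List (γ × α) // (l.map Prod.fst).Chain' (· > ·)}

/-- The lexicographic order on `(1+α)^γ`, earlier pairs taking priority, where a
pair is smaller if its `γ`-component is smaller, or the `γ`-components agree and
its `α`-component is `lt`-smaller. -/
def ELt {γ α : Type*} [LinearOrder γ] (lt : α → α → Prop) (σ τ : EList γ α) : Prop :=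
  List.Lex (fun p q => p.1 < q.1 ∨ (p.1 = q.1 ∧ lt p.2 q.2)) σ.1 τ.1

section Aux

variable {γ α : Type} [LinearOrder γ] {lt : α → α → Prop}
variable (b : Ordinal) (rγ : γ → Ordinal) (rα : α → Ordinal)

/-- Ordinal value of a sequence. -/
noncomputable def eval : List (γ × α) → Ordinal
  | [] => 0
  | (x, y) :: l => b ^ rγ x * (rα y + 1) + eval l

variable {b rγ rα}

lemma eval_lt_opow (hb2 : 2 ≤ b) (hbα : ∀ y, rα y + 2 ≤ b)
    (hrγ : ∀ {u v : γ}, u < v → rγ u < rγ v) :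
    ∀ (l : List (γ × α)), (l.map Prod.fst).Chain' (· > ·) →
      ∀ x : γ, (∀ p ∈ l, p.1 < x) → eval b rγ rα l < b ^ rγ x := by
  intro l
  induction l with
  | nil =>
    intro _ x _
    exact Ordinal.opow_pos _ (lt_of_lt_of_le (by norm_num) hb2)
  | cons p l ih =>
    intro hc x hx
    obtain ⟨x0, y0⟩ := p
    have hc' : (l.map Prod.fst).Chain' (· > ·) := hc.tail
    have hlt0 : ∀ q ∈ l, q.1 < x0 := by
      intro q hq
      have := List.isChain_iff_pairwise.mp hc
      simp only [List.map_cons, List.pairwise_cons] at this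
      exact this.1 q.1 (List.mem_map_of_mem (f := Prod.fst) hq)
    have htail : eval b rγ rα l < b ^ rγ x0 := ih hc' x0 hlt0
    have hx0 : x0 < x := hx (x0, y0) List.mem_cons_self
    calc eval b rγ rα ((x0, y0) :: l)
        = b ^ rγ x0 * (rα y0 + 1) + eval b rγ rα l := rfl
      _ < b ^ rγ x0 * (rα y0 + 1) + b ^ rγ x0 := by
          exact (add_lt_add_iff_left _).2 htail
      _ = b ^ rγ x0 * (rα y0 + 2) := by
          rw [show rα y0 + 2 = Order.succ (rα y0 + 1) by
            rw [← Ordinal.add_one_eq_succ, add_assoc, one_add_one_eq_two], Ordinal.mul_succ]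
      _ ≤ b ^ rγ x0 * b := mul_le_mul_right (hbα y0) _
      _ = b ^ Order.succ (rγ x0) := (Ordinal.opow_succ b _).symm
      _ ≤ b ^ rγ x := Ordinal.opow_le_opow_right
            (lt_of_lt_of_le (by norm_num) hb2) (Order.succ_le_iff.2 (hrγ hx0))

lemma eval_strictMono (hb2 : 2 ≤ b) (hbα : ∀ y, rα y + 2 ≤ b)
    (hrγ : ∀ {u v : γ}, u < v → rγ u < rγ v)
    (hrα : ∀ {u v : α}, lt u v → rα u < rα v) :
    ∀ {l l' : List (γ × α)},
      List.Lex (fun p q => p.1 < q.1 ∨ (p.1 = q.1 ∧ lt p.2 q.2)) l l' →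
      (l.map Prod.fst).Chain' (· > ·) → (l'.map Prod.fst).Chain' (· > ·) →
      eval b rγ rα l < eval b rγ rα l' := by
  intro l l' h
  induction h with
  | nil =>
    rename_i q l'
    intro _ _
    obtain ⟨x, y⟩ := q
    calc (0 : Ordinal) < b ^ rγ x * (rα y + 1) := by
          apply mul_pos (Ordinal.opow_pos _ (lt_of_lt_of_le (by norm_num) hb2))
          exact lt_of_lt_of_le (by norm_num) (le_add_self : 1 ≤ rα y + 1)
      _ ≤ eval b rγ rα ((x, y) :: l') := le_self_add
  | @rel p l q l' hpq =>
    intro hc hc'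
    obtain ⟨x, y⟩ := p; obtain ⟨x', y'⟩ := q
    have hle : b ^ rγ x' * 1 ≤ b ^ rγ x' * (rα y' + 1) := by
      apply mul_le_mul_right
      exact le_trans (by norm_num) (le_add_self : 1 ≤ rα y' + 1)
    rw [mul_one] at hle
    rcases hpq with hxx | ⟨hxx, hyy⟩
    · -- x < x'
      have hall : ∀ r ∈ (x, y) :: l, r.1 < x' := by
        intro r hr
        rcases List.mem_cons.mp hr with rfl | hr
        · exact hxx
        · have := List.isChain_iff_pairwise.mp hc
          simp only [List.map_cons, List.pairwise_cons] at this
          exact lt_trans (this.1 r.1 (List.mem_map_of_mem (f := Prod.fst) hr)) hxx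
      calc eval b rγ rα ((x, y) :: l) < b ^ rγ x' :=
            eval_lt_opow hb2 hbα hrγ _ hc x' hall
        _ ≤ b ^ rγ x' * (rα y' + 1) := hle
        _ ≤ eval b rγ rα ((x', y') :: l') := le_self_add
    · -- x = x', lt y y'
      simp only at hxx; subst hxx
      have hlt0 : ∀ q ∈ l, q.1 < x := by
        intro q hq
        have := List.isChain_iff_pairwise.mp hc
        simp only [List.map_cons, List.pairwise_cons] at this
        exact this.1 q.1 (List.mem_map_of_mem (f := Prod.fst) hq)
      have htail : eval b rγ rα l < b ^ rγ x := eval_lt_opow hb2 hbα hrγ _ hc.tail x hlt0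
      have hy2 : rα y + 2 ≤ rα y' + 1 := by
        have : rα y + 1 ≤ rα y' := by
          rw [Ordinal.add_one_eq_succ]; exact Order.succ_le_iff.2 (hrα hyy)
        calc rα y + 2 = rα y + 1 + 1 := by rw [add_assoc, one_add_one_eq_two]
          _ ≤ rα y' + 1 := add_le_add_left this 1
      calc eval b rγ rα ((x, y) :: l)
          = b ^ rγ x * (rα y + 1) + eval b rγ rα l := rfl
        _ < b ^ rγ x * (rα y + 1) + b ^ rγ x := (add_lt_add_iff_left _).2 htail
        _ = b ^ rγ x * (rα y + 2) := by
            rw [show rα y + 2 = Order.succ (rα y + 1) by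
              rw [← Ordinal.add_one_eq_succ, add_assoc, one_add_one_eq_two], Ordinal.mul_succ]
        _ ≤ b ^ rγ x * (rα y' + 1) := mul_le_mul_right hy2 _
        _ ≤ eval b rγ rα ((x, y') :: l') := le_self_add
  | @cons p l l' _ ih =>
    intro hc hc'
    obtain ⟨x, y⟩ := p
    exact (add_lt_add_iff_left _).2 (ih hc.tail hc'.tail)

end Aux

/-- `(1+α)^γ` is well-founded for every well order `α` if and only if `γ` is
well-founded. -/
theorem stmt17 (γ : Type) [LinearOrder γ] :
    (∀ (α : Type) (lt : α → α → Prop), IsStrictTotalOrder α lt → WellFounded lt →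
        WellFounded (ELt (γ := γ) lt)) ↔
      WellFounded ((· < ·) : γ → γ → Prop) := by
  constructor
  · intro H
    have hsto : IsStrictTotalOrder Unit (fun _ _ => False) :=
      { irrefl := fun _ h => h
        trans := fun _ _ _ h => h.elim
        trichotomous := fun a b _ _ => rfl }
    have wfU : WellFounded (fun _ _ : Unit => False) :=
      ⟨fun a => ⟨a, fun _ h => h.elim⟩⟩
    have h := H Unit _ hsto wfU
    have hmap : ∀ x : γ, ((([(x, ())] : List (γ × Unit))).map Prod.fst).Chain' (· > ·) := by
      intro x; simp; exact List.isChain_singleton x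
    refine Subrelation.wf (r := InvImage (ELt (fun _ _ : Unit => False))
      (fun x : γ => (⟨[(x, ())], hmap x⟩ : EList γ Unit))) ?_ (InvImage.wf _ h)
    intro a b hab
    exact List.Lex.rel (Or.inl hab)
  · intro hγ α lt hsto hα
    letI : IsWellFounded γ (· < ·) := ⟨hγ⟩
    letI : IsWellFounded α lt := ⟨hα⟩
    set rγ : γ → Ordinal := IsWellFounded.rank (· < ·) with hrγdef
    set rα : α → Ordinal := IsWellFounded.rank lt with hrαdef
    set b : Ordinal := max (⨆ y : α, rα y + 2) 2 with hbdef
    have hb2 : 2 ≤ b := le_max_right _ _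
    have hbα : ∀ y, rα y + 2 ≤ b := fun y =>
      le_trans (le_ciSup (Ordinal.bddAbove_range _) y) (le_max_left _ _)
    have hrγ : ∀ {u v : γ}, u < v → rγ u < rγ v := fun h => IsWellFounded.rank_lt_of_rel h
    have hrα : ∀ {u v : α}, lt u v → rα u < rα v := fun h => IsWellFounded.rank_lt_of_rel h
    refine Subrelation.wf (r := InvImage (· < ·) (fun σ : EList γ α => eval b rγ rα σ.1))
      ?_ (InvImage.wf _ Ordinal.lt_wf)
    intro σ τ hst
    exact eval_strictMono hb2 hbα hrγ hrα hst σ.2 τ.2
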